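/- Let G be a connected finite simple graph of order n ≥ 13 with degree sequence d₁ ≤ ⋯ ≤ d_n satisfying the weak Chvátal condition (for all 1 ≤ i < n/2, d_i ≥ i + 1 or d_{n−i} ≥ n − i − 1), having at most one vertex of degree 1, and with m(G,2) > 2. Let L = {v ∈ V(G) : d(v) ≥ (n−1)/2}, let I be a set of maximum cardinality among all closures ⟨A⟩ of two-element sets A ⊆ V(G) under 2-neighbor bootstrap percolation that have nonempty intersection with L, and let U = V(G) ∖ I. Then no vertex of L ∩ U has a neighbor in I. -/
import Mathlib
open Finset
open scoped Classical

/-- One step of the `r`-neighbor bootstrap percolation process: all currently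
active vertices stay active, and every vertex with at least `r` active
neighbors becomes active. -/
noncomputable def bootStep {V : Type*} [Fintype V] (G : SimpleGraph V) (r : ℕ)
    (A : Finset V) : Finset V :=
  A ∪ Finset.univ.filter (fun v => r ≤ (G.neighborFinset v ∩ A).card)

/-- The closure of `A` under `r`-neighbor bootstrap percolation, i.e. `⋃ₜ Aₜ`.
Since the process is monotone on a finite vertex set, iterating `|V|` times
reaches the fixed point. -/
noncomputable def bootClosure {V : Type*} [Fintype V] (G : SimpleGraph V) (r : ℕ)
    (A : Finset V) : Finset V :=
  (bootStep G r)^[Fintype.card V] A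

/-- `G` `r`-percolates from the initially active set `A`. -/
def Percolates {V : Type*} [Fintype V] (G : SimpleGraph V) (r : ℕ)
    (A : Finset V) : Prop :=
  ∃ t : ℕ, (bootStep G r)^[t] A = Finset.univ

/-- `m(G, r)`: the minimum size of an `r`-contagious set in `G`. -/
noncomputable def minContagious {V : Type*} [Fintype V] (G : SimpleGraph V) (r : ℕ) : ℕ :=
  sInf {k : ℕ | ∃ A : Finset V, A.card = k ∧ Percolates G r A}

section Infra
variable {V : Type*} [Fintype V] (G : SimpleGraph V) (r : ℕ)

lemma subset_bootStep (A : Finset V) : A ⊆ bootStep G r A := Finset.subset_union_left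

lemma mem_bootStep_of_card (A : Finset V) (v : V)
    (h : r ≤ (G.neighborFinset v ∩ A).card) : v ∈ bootStep G r A :=
  Finset.mem_union_right _ (Finset.mem_filter.mpr ⟨Finset.mem_univ v, h⟩)

lemma subset_bootClosure (A : Finset V) : A ⊆ bootClosure G r A := by
  unfold bootClosure
  generalize Fintype.card V = k
  induction k with
  | zero => simp
  | succ k ih =>
      rw [Function.iterate_succ_apply']
      exact ih.trans (subset_bootStep G r _)

lemma bootStep_bootClosure (A : Finset V) :
    bootStep G r (bootClosure G r A) = bootClosure G r A := by
  classical
  have hstep : ∀ k : ℕ, (bootStep G r)^[k + 1] A = bootStep G r ((bootStep G r)^[k] A) :=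
    fun k => Function.iterate_succ_apply' _ _ _
  have key : ∀ k : ℕ, bootStep G r ((bootStep G r)^[k] A) = (bootStep G r)^[k] A ∨
      k ≤ ((bootStep G r)^[k] A).card := by
    intro k
    induction k with
    | zero => right; omega
    | succ k ih =>
        rcases ih with h | h
        · left
          rw [hstep k, h, h]
        · by_cases hk : bootStep G r ((bootStep G r)^[k] A) = (bootStep G r)^[k] A
          · left
            rw [hstep k, hk, hk]
          · right
            have hsub : (bootStep G r)^[k] A ⊆ (bootStep G r)^[k + 1] A := by
              rw [hstep k]
              exact subset_bootStep G r _
            have hlt : ((bootStep G r)^[k] A).card < ((bootStep G r)^[k + 1] A).card := by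
              apply Finset.card_lt_card
              refine ⟨hsub, fun hc => hk ?_⟩
              rw [hstep k] at hc
              exact Finset.Subset.antisymm hc (subset_bootStep G r _)
            omega
  have huniv : bootStep G r (Finset.univ : Finset V) = Finset.univ :=
    Finset.Subset.antisymm (Finset.subset_univ _) (subset_bootStep G r _)
  rcases key (Fintype.card V) with h | h
  · exact h
  · have hcardle : ((bootStep G r)^[Fintype.card V] A).card ≤ Fintype.card V := by
      simpa using Finset.card_le_card (Finset.subset_univ ((bootStep G r)^[Fintype.card V] A))
    have hc : ((bootStep G r)^[Fintype.card V] A).card = Fintype.card V := le_antisymm hcardle h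
    have heq : (bootStep G r)^[Fintype.card V] A = Finset.univ :=
      Finset.eq_univ_of_card _ (by simpa using hc)
    show bootStep G r ((bootStep G r)^[Fintype.card V] A) = (bootStep G r)^[Fintype.card V] A
    rw [heq, huniv]

lemma mem_bootClosure_of_two (A : Finset V) (v a b : V)
    (ha : a ∈ bootClosure G 2 A) (hb : b ∈ bootClosure G 2 A) (hab : a ≠ b)
    (hva : G.Adj v a) (hvb : G.Adj v b) : v ∈ bootClosure G 2 A := by
  have h2 : 2 ≤ (G.neighborFinset v ∩ bootClosure G 2 A).card := by
    have hsub : ({a, b} : Finset V) ⊆ G.neighborFinset v ∩ bootClosure G 2 A := by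
      intro x hx
      rcases Finset.mem_insert.mp hx with h | h
      · subst h
        refine Finset.mem_inter.mpr ⟨?_, ha⟩
        rw [SimpleGraph.mem_neighborFinset]; exact hva
      · rw [Finset.mem_singleton.mp h]
        refine Finset.mem_inter.mpr ⟨?_, hb⟩
        rw [SimpleGraph.mem_neighborFinset]; exact hvb
    calc 2 = ({a, b} : Finset V).card := (Finset.card_pair hab).symm
    _ ≤ _ := Finset.card_le_card hsub
  have := mem_bootStep_of_card G 2 (bootClosure G 2 A) v h2
  rwa [bootStep_bootClosure] at this

lemma sum_inter_comm (X Y : Finset V) :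
    ∑ x ∈ X, (G.neighborFinset x ∩ Y).card = ∑ y ∈ Y, (G.neighborFinset y ∩ X).card := by
  have h : ∀ W : Finset V, ∀ x : V, (G.neighborFinset x ∩ W).card
      = ∑ y ∈ W, if G.Adj x y then 1 else 0 := by
    intro W x
    rw [Finset.inter_comm, ← Finset.filter_mem_eq_inter]
    simp only [SimpleGraph.mem_neighborFinset]
    rw [Finset.card_filter]
  simp only [h]
  rw [Finset.sum_comm]
  congr 1
  ext y
  congr 1
  ext x
  by_cases hxy : G.Adj x y
  · simp [hxy, hxy.symm]
  · have h' : ¬ G.Adj y x := fun h' => hxy h'.symm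
    simp [hxy, h']

end Infra

section Arith

private lemma arith1 (a b s cc n : ℤ) (h1 : a * cc ≤ (a - 1) * (b - 1) + s)
    (h2 : 2 * cc = n) (h3 : 2 * b ≤ n) (h4 : b + s = n) (h5 : 2 ≤ a) : False := by
  nlinarith [mul_le_mul_of_nonneg_left (by linarith : b ≤ cc) (by linarith : (0:ℤ) ≤ a - 2)]

private lemma arith2 (a b s cc n : ℤ) (h1 : a * cc ≤ (a - 1) * (b - 1) + s)
    (h2 : 2 * cc + 1 = n) (h3 : 2 * b ≤ n - 1) (h4 : b + s = n) (h5 : 3 ≤ a) : False := by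
  nlinarith [mul_le_mul_of_nonneg_left (by linarith : b ≤ cc) (by linarith : (0:ℤ) ≤ a - 2)]

private lemma arith3 (q b s n : ℤ) (h1 : q * (n + 1 - 2 * b) ≤ 2 * s)
    (h4 : b + s = n) (hq : 2 * q ≥ n - 2) (h3 : 3 ≤ n + 1 - 2 * b)
    (h5 : 13 ≤ n) (h6 : 1 ≤ q) : False := by
  nlinarith [mul_nonneg (by linarith : (0:ℤ) ≤ n + 1 - 2 * b - 3) (by linarith : (0:ℤ) ≤ q - 1)]

private lemma arith4 (q b s n : ℤ) (h1 : q * (n + 1 - 2 * b) ≤ 2 * s)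
    (h4 : b + s = n) (hq : 2 * q ≥ n - 4) (h3 : 4 ≤ n + 1 - 2 * b)
    (h5 : 13 ≤ n) (h6 : 1 ≤ q) : False := by
  nlinarith [mul_nonneg (by linarith : (0:ℤ) ≤ n + 1 - 2 * b - 4) (by linarith : (0:ℤ) ≤ q - 1)]

end Arith

set_option maxHeartbeats 4000000 in
theorem stmt16 {V : Type*} [Fintype V] (G : SimpleGraph V)
    (hconn : G.Connected)
    (n : ℕ) (hcard : Fintype.card V = n) (hn : 13 ≤ n)
    (e : Fin n ≃ V)
    (hmono : ∀ i j : Fin n, i ≤ j → G.degree (e i) ≤ G.degree (e j))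
    (hchv : ∀ i : ℕ, ∀ h1 : 1 ≤ i, ∀ h2 : 2 * i < n,
      i + 1 ≤ G.degree (e ⟨i - 1, by omega⟩) ∨
      n - i - 1 ≤ G.degree (e ⟨n - i - 1, by omega⟩))
    (hdeg1 : (Finset.univ.filter (fun v => G.degree v = 1)).card ≤ 1)
    (hm : 2 < minContagious G 2)
    (L : Finset V) (hL : L = Finset.univ.filter (fun v => n - 1 ≤ 2 * G.degree v))
    (I : Finset V)
    (hIcl : ∃ A : Finset V, A.card = 2 ∧ I = bootClosure G 2 A)
    (hIL : (I ∩ L).Nonempty)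
    (hImax : ∀ A : Finset V, A.card = 2 → (bootClosure G 2 A ∩ L).Nonempty →
      (bootClosure G 2 A).card ≤ I.card) :
    ∀ u ∈ L ∩ (Finset.univ \ I), ∀ w ∈ I, ¬ G.Adj u w := by
  classical
  intro u hu w hwI hadj
  obtain ⟨huL, huU'⟩ := Finset.mem_inter.mp hu
  have huI : u ∉ I := (Finset.mem_sdiff.mp huU').2
  obtain ⟨A₀, hA₀card, hIA⟩ := hIcl
  have hIclosed : bootStep G 2 I = I := by rw [hIA]; exact bootStep_bootClosure G 2 A₀
  -- degrees of L-vertices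
  have hdegL : ∀ v ∈ L, n ≤ 2 * G.degree v + 1 := by
    intro v hv
    rw [hL, Finset.mem_filter] at hv
    omega
  have hLmem : ∀ v : V, n ≤ 2 * G.degree v + 1 → v ∈ L := by
    intro v hv
    rw [hL, Finset.mem_filter]
    exact ⟨Finset.mem_univ v, by omega⟩
  set U : Finset V := Finset.univ \ I with hU
  have hmem_U : ∀ v : V, v ∈ U ↔ v ∉ I := by
    intro v
    rw [hU, Finset.mem_sdiff]
    simp
  have huU : u ∈ U := (hmem_U u).mpr huI
  have hms : I.card + U.card = n := by
    rw [hU]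
    rw [Finset.card_sdiff_of_subset (Finset.subset_univ I)]
    have : I.card ≤ Fintype.card V := by
      simpa using Finset.card_le_card (Finset.subset_univ I)
    simp only [Finset.card_univ, hcard]
    rw [hcard] at this
    omega
  -- Pi1 : vertices outside I have at most one neighbor in I
  have hPi1 : ∀ z, z ∉ I → (G.neighborFinset z ∩ I).card ≤ 1 := by
    intro z hz
    by_contra hcon
    push_neg at hcon
    have : z ∈ bootStep G 2 I := mem_bootStep_of_card G 2 I z (by omega)
    rw [hIclosed] at this
    exact hz this
  -- degree splitting
  have hIU : ∀ v : V, (G.neighborFinset v ∩ I) ∪ (G.neighborFinset v ∩ U) = G.neighborFinset v := by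
    intro v
    rw [← Finset.inter_union_distrib_left, hU, Finset.union_sdiff_of_subset (Finset.subset_univ I),
      Finset.inter_univ]
  have hdisjIU : ∀ v : V, Disjoint (G.neighborFinset v ∩ I) (G.neighborFinset v ∩ U) := by
    intro v
    apply Finset.disjoint_of_subset_left Finset.inter_subset_right
    apply Finset.disjoint_of_subset_right Finset.inter_subset_right
    rw [hU]
    exact Finset.disjoint_sdiff
  have hsplit : ∀ v : V, G.degree v
      = (G.neighborFinset v ∩ I).card + (G.neighborFinset v ∩ U).card := by
    intro v
    rw [← Finset.card_union_of_disjoint (hdisjIU v), hIU v]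
    rfl
  -- Pi3 : U-degrees at most |U|
  have hPi3 : ∀ z ∈ U, G.degree z ≤ U.card := by
    intro z hz
    have h1 := hPi1 z ((hmem_U z).mp hz)
    have h2 : (G.neighborFinset z ∩ U).card ≤ U.card - 1 := by
      have hsub : G.neighborFinset z ∩ U ⊆ U.erase z := by
        intro x hx
        obtain ⟨hx1, hx2⟩ := Finset.mem_inter.mp hx
        refine Finset.mem_erase.mpr ⟨?_, hx2⟩
        intro hxz
        subst hxz
        exact G.irrefl ((SimpleGraph.mem_neighborFinset _ _ _).mp hx1)
      calc (G.neighborFinset z ∩ U).card ≤ (U.erase z).card := Finset.card_le_card hsub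
      _ = U.card - 1 := Finset.card_erase_of_mem hz
    have hz1 : 1 ≤ U.card := Finset.card_pos.mpr ⟨z, hz⟩
    rw [hsplit z]
    omega
  -- closure membership helper with seeds
  have hseed : ∀ p q : V, p ∈ bootClosure G 2 {p, q} ∧ q ∈ bootClosure G 2 {p, q} := by
    intro p q
    constructor
    · exact subset_bootClosure G 2 _ (Finset.mem_insert_self p {q})
    · exact subset_bootClosure G 2 _ (Finset.mem_insert_of_mem (Finset.mem_singleton_self q))
  have hMAX : ∀ p q : V, p ∈ L → p ≠ q → (bootClosure G 2 {p, q}).card ≤ I.card := by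
    intro p q hp hpq
    apply hImax _ (Finset.card_pair hpq)
    exact ⟨p, Finset.mem_inter.mpr ⟨(hseed p q).1, hp⟩⟩
  have hwu : G.Adj w u := hadj.symm
  have hwU : w ∉ U := fun h => ((hmem_U w).mp h) hwI
  have huw : u ≠ w := fun h => huI (h ▸ hwI)
  -- the unique I-neighbor of u is w
  have hNuI : G.neighborFinset u ∩ I = {w} := by
    apply Finset.Subset.antisymm
    · intro x hx
      obtain ⟨hx1, hx2⟩ := Finset.mem_inter.mp hx
      have hwmem : w ∈ G.neighborFinset u ∩ I := by
        refine Finset.mem_inter.mpr ⟨?_, hwI⟩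
        rw [SimpleGraph.mem_neighborFinset]; exact hadj
      rw [Finset.mem_singleton]
      exact Finset.card_le_one.mp (hPi1 u huI) x hx w hwmem
    · intro x hx
      rw [Finset.mem_singleton] at hx
      subst hx
      refine Finset.mem_inter.mpr ⟨?_, hwI⟩
      rw [SimpleGraph.mem_neighborFinset]; exact hadj
  set K : Finset V := L ∩ U with hK
  have huK : u ∈ K := Finset.mem_inter.mpr ⟨huL, huU⟩
  have hKU : K ⊆ U := Finset.inter_subset_right
  have hKL : K ⊆ L := Finset.inter_subset_left
  have hlam1 : 1 ≤ K.card := Finset.card_pos.mpr ⟨u, huK⟩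
  have hKdisjI : ∀ p, p ∈ K → p ∉ I := fun p hp => (hmem_U p).mp (hKU hp)
  -- BLOCK A : K is a clique
  have hclique : ∀ p q, p ∈ K → q ∈ K → p ≠ q → G.Adj p q := by
    intro p q hp hq hpq
    by_contra hnadj
    set S := bootClosure G 2 {p, q} with hS
    set X := G.neighborFinset p ∩ U with hX
    set Y := G.neighborFinset q ∩ U with hY
    have hXY : X ∩ Y ⊆ S := by
      intro y hy
      obtain ⟨hy1, hy2⟩ := Finset.mem_inter.mp hy
      have hyp : G.Adj y p := ((SimpleGraph.mem_neighborFinset _ _ _).mp (Finset.mem_inter.mp hy1).1).symm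
      have hyq : G.Adj y q := ((SimpleGraph.mem_neighborFinset _ _ _).mp (Finset.mem_inter.mp hy2).1).symm
      exact mem_bootClosure_of_two G _ y p q (hseed p q).1 (hseed p q).2 hpq hyp hyq
    have hps : p ∈ S := (hseed p q).1
    have hqs : q ∈ S := (hseed p q).2
    have hpXY : p ∉ X ∩ Y := by
      intro h
      exact G.irrefl ((SimpleGraph.mem_neighborFinset _ _ _).mp (Finset.mem_inter.mp ((Finset.mem_inter.mp h).1)).1)
    have hqXY : q ∉ X ∩ Y := by
      intro h
      exact G.irrefl ((SimpleGraph.mem_neighborFinset _ _ _).mp (Finset.mem_inter.mp ((Finset.mem_inter.mp h).2)).1)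
    have hsub : insert p (insert q (X ∩ Y)) ⊆ S := by
      intro x hx
      rcases Finset.mem_insert.mp hx with h | h
      · exact h ▸ hps
      rcases Finset.mem_insert.mp h with h' | h'
      · exact h' ▸ hqs
      · exact hXY h'
    have hcard1 : (X ∩ Y).card + 2 ≤ S.card := by
      have h1 : (insert p (insert q (X ∩ Y))).card = (X ∩ Y).card + 2 := by
        rw [Finset.card_insert_of_notMem, Finset.card_insert_of_notMem hqXY]
        intro hmem
        rcases Finset.mem_insert.mp hmem with h | h
        · exact hpq h
        · exact hpXY h
      rw [← h1]
      exact Finset.card_le_card hsub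
    -- intersection lower bound
    have hXsub : X ⊆ (U.erase p).erase q := by
      intro x hx
      obtain ⟨hx1, hx2⟩ := Finset.mem_inter.mp hx
      have hadjpx : G.Adj p x := (SimpleGraph.mem_neighborFinset _ _ _).mp hx1
      refine Finset.mem_erase.mpr ⟨?_, Finset.mem_erase.mpr ⟨?_, hx2⟩⟩
      · intro h; subst h; exact hnadj hadjpx
      · intro h; subst h; exact G.irrefl hadjpx
    have hYsub : Y ⊆ (U.erase p).erase q := by
      intro x hx
      obtain ⟨hx1, hx2⟩ := Finset.mem_inter.mp hx
      have hadjqx : G.Adj q x := (SimpleGraph.mem_neighborFinset _ _ _).mp hx1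
      refine Finset.mem_erase.mpr ⟨?_, Finset.mem_erase.mpr ⟨?_, hx2⟩⟩
      · intro h; subst h; exact G.irrefl hadjqx
      · intro h; subst h; exact hnadj hadjqx.symm
    have hWcard : ((U.erase p).erase q).card = U.card - 2 := by
      have hqep : q ∈ U.erase p := Finset.mem_erase.mpr ⟨fun h => hpq h.symm, hKU hq⟩
      rw [Finset.card_erase_of_mem hqep, Finset.card_erase_of_mem (hKU hp)]
      omega
    have hunion : (X ∪ Y).card ≤ U.card - 2 := by
      rw [← hWcard]
      exact Finset.card_le_card (Finset.union_subset hXsub hYsub)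
    have hinter : X.card + Y.card ≤ (X ∩ Y).card + (U.card - 2) := by
      have := Finset.card_inter_add_card_union X Y
      omega
    have hXc : G.degree p ≤ X.card + 1 := by
      have := hsplit p
      have := hPi1 p (hKdisjI p hp)
      rw [hX]; omega
    have hYc : G.degree q ≤ Y.card + 1 := by
      have := hsplit q
      have := hPi1 q (hKdisjI q hq)
      rw [hY]; omega
    have hdp := hdegL p (hKL hp)
    have hdq := hdegL q (hKL hq)
    have hSmax : S.card ≤ I.card := hMAX p q (hKL hp) hpq
    have hU2 : 2 ≤ U.card := Finset.one_lt_card.mpr ⟨p, hKU hp, q, hKU hq, hpq⟩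
    omega
  -- full rows
  have hfull_of : ∀ x ∈ I, I.card ≤ (G.neighborFinset x ∩ I).card + 1 →
      ∀ y ∈ I, y ≠ x → G.Adj x y := by
    intro x hx hcardx y hy hyx
    have hsub : G.neighborFinset x ∩ I ⊆ I.erase x := by
      intro z hz
      obtain ⟨hz1, hz2⟩ := Finset.mem_inter.mp hz
      refine Finset.mem_erase.mpr ⟨?_, hz2⟩
      intro h; subst h
      exact G.irrefl ((SimpleGraph.mem_neighborFinset _ _ _).mp hz1)
    have hcard2 : (I.erase x).card ≤ (G.neighborFinset x ∩ I).card := by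
      rw [Finset.card_erase_of_mem hx]; omega
    have heq : G.neighborFinset x ∩ I = I.erase x :=
      Finset.eq_of_subset_of_card_le hsub hcard2
    have : y ∈ G.neighborFinset x ∩ I := by
      rw [heq]; exact Finset.mem_erase.mpr ⟨hyx, hy⟩
    exact (SimpleGraph.mem_neighborFinset _ _ _).mp (Finset.mem_inter.mp this).1
  -- BLOCK B : two full rows avoiding w give a contradiction
  have hKILLFULL : ∀ x₁ x₂ : V, x₁ ∈ I → x₂ ∈ I → x₁ ≠ x₂ → x₁ ≠ w → x₂ ≠ w →
      (∀ y ∈ I, y ≠ x₁ → G.Adj x₁ y) → (∀ y ∈ I, y ≠ x₂ → G.Adj x₂ y) → False := by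
    intro x₁ x₂ hx₁I hx₂I hx12 hx1w hx2w hfull1 hfull2
    set S := bootClosure G 2 {u, x₁} with hS
    have hux1 : u ≠ x₁ := fun h => huI (h ▸ hx₁I)
    have huS : u ∈ S := (hseed u x₁).1
    have hx1S : x₁ ∈ S := (hseed u x₁).2
    have hwS : w ∈ S :=
      mem_bootClosure_of_two G _ w u x₁ huS hx1S hux1 hwu ((hfull1 w hwI (Ne.symm hx1w)).symm)
    have hx2S : x₂ ∈ S :=
      mem_bootClosure_of_two G _ x₂ x₁ w hx1S hwS hx1w
        (hfull2 x₁ hx₁I hx12) (hfull2 w hwI (Ne.symm hx2w))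
    have hIS : I ⊆ S := by
      intro y hy
      by_cases h1 : y = x₁
      · exact h1 ▸ hx1S
      by_cases h2 : y = x₂
      · exact h2 ▸ hx2S
      exact mem_bootClosure_of_two G _ y x₁ x₂ hx1S hx2S hx12
        ((hfull1 y hy h1).symm) ((hfull2 y hy h2).symm)
    have hsub : insert u I ⊆ S := by
      intro x hx
      rcases Finset.mem_insert.mp hx with h | h
      · exact h ▸ huS
      · exact hIS h
    have hc1 : I.card + 1 ≤ S.card := by
      rw [← Finset.card_insert_of_notMem huI]
      exact Finset.card_le_card hsub
    have hc2 : S.card ≤ I.card := hMAX u x₁ huL hux1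
    omega
  -- total I-U edge bound
  have heIU : ∑ x ∈ I, (G.neighborFinset x ∩ U).card ≤ U.card := by
    rw [sum_inter_comm]
    calc ∑ z ∈ U, (G.neighborFinset z ∩ I).card ≤ ∑ _z ∈ U, 1 :=
      Finset.sum_le_sum (fun z hz => hPi1 z ((hmem_U z).mp hz))
    _ = U.card := by simp
  -- BLOCK C : KEY2
  have hLI : ∀ x, x ∈ L ∩ I → n + 1 ≤ 2 * I.card + 2 * (G.neighborFinset x ∩ U).card := by
    intro x hx
    obtain ⟨hxL, hxI⟩ := Finset.mem_inter.mp hx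
    have h1 := hdegL x hxL
    have h2 := hsplit x
    have h3 : (G.neighborFinset x ∩ I).card ≤ I.card - 1 := by
      have hsub : G.neighborFinset x ∩ I ⊆ I.erase x := by
        intro z hz
        obtain ⟨hz1, hz2⟩ := Finset.mem_inter.mp hz
        refine Finset.mem_erase.mpr ⟨?_, hz2⟩
        intro h; subst h
        exact G.irrefl ((SimpleGraph.mem_neighborFinset _ _ _).mp hz1)
      calc (G.neighborFinset x ∩ I).card ≤ (I.erase x).card := Finset.card_le_card hsub
      _ = I.card - 1 := Finset.card_erase_of_mem hxI
    have h4 : 1 ≤ I.card := Finset.card_pos.mpr ⟨x, hxI⟩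
    omega
  have hKEY2 : (L ∩ I).card * (n + 1) ≤ (L ∩ I).card * (2 * I.card) + 2 * U.card := by
    have h1 : (L ∩ I).card * (n + 1) = ∑ _x ∈ L ∩ I, (n + 1) := by
      rw [Finset.sum_const, smul_eq_mul, mul_comm]
    have h2 : ∑ x ∈ L ∩ I, (n + 1)
        ≤ ∑ x ∈ L ∩ I, (2 * I.card + 2 * (G.neighborFinset x ∩ U).card) :=
      Finset.sum_le_sum (fun x hx => hLI x hx)
    have h3 : ∑ x ∈ L ∩ I, (2 * I.card + 2 * (G.neighborFinset x ∩ U).card)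
        = (L ∩ I).card * (2 * I.card) + 2 * ∑ x ∈ L ∩ I, (G.neighborFinset x ∩ U).card := by
      rw [Finset.sum_add_distrib, Finset.sum_const, smul_eq_mul, mul_comm, Finset.mul_sum]
    have h4 : ∑ x ∈ L ∩ I, (G.neighborFinset x ∩ U).card
        ≤ ∑ x ∈ I, (G.neighborFinset x ∩ U).card :=
      Finset.sum_le_sum_of_subset Finset.inter_subset_right
    calc (L ∩ I).card * (n + 1) = ∑ _x ∈ L ∩ I, (n + 1) := h1
    _ ≤ ∑ x ∈ L ∩ I, (2 * I.card + 2 * (G.neighborFinset x ∩ U).card) := h2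
    _ = (L ∩ I).card * (2 * I.card) + 2 * ∑ x ∈ L ∩ I, (G.neighborFinset x ∩ U).card := h3
    _ ≤ (L ∩ I).card * (2 * I.card) + 2 * U.card := by
        have h5 := le_trans h4 heIU
        omega
  -- L partition
  have hLsplit : L.card = K.card + (L ∩ I).card := by
    have h1 : (L ∩ I).card + (L \ I).card = L.card := Finset.card_inter_add_card_sdiff L I
    have h2 : L \ I = K := by
      ext x
      rw [Finset.mem_sdiff, hK, Finset.mem_inter, hmem_U x]
    rw [h2] at h1
    omega
  -- degree sequence extraction
  have hEX1 : ∀ (j : ℕ) (hj : j < n) (k : ℕ), k ≤ G.degree (e ⟨j, hj⟩) →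
      n - j ≤ (Finset.univ.filter (fun v => k ≤ G.degree v)).card := by
    intro j hj k hk
    have himg : (Finset.Ici (⟨j, hj⟩ : Fin n)).image e
        ⊆ Finset.univ.filter (fun v => k ≤ G.degree v) := by
      intro v hv
      obtain ⟨i, hi, rfl⟩ := Finset.mem_image.mp hv
      exact Finset.mem_filter.mpr ⟨Finset.mem_univ _,
        le_trans hk (hmono _ i (Finset.mem_Ici.mp hi))⟩
    calc n - j = (Finset.Ici (⟨j, hj⟩ : Fin n)).card := by rw [Fin.card_Ici]
    _ = ((Finset.Ici (⟨j, hj⟩ : Fin n)).image e).card :=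
      (Finset.card_image_of_injective _ e.injective).symm
    _ ≤ _ := Finset.card_le_card himg
  have hEX2 : ∀ (j : ℕ) (hj : j < n) (k : ℕ), k ≤ G.degree (e ⟨j, hj⟩) →
      (Finset.univ.filter (fun v => G.degree v < k)).card ≤ j := by
    intro j hj k hk
    have hsub : Finset.univ.filter (fun v => G.degree v < k)
        ⊆ (Finset.Iio (⟨j, hj⟩ : Fin n)).image e := by
      intro v hv
      have hdv := (Finset.mem_filter.mp hv).2
      refine Finset.mem_image.mpr ⟨e.symm v, ?_, e.apply_symm_apply v⟩
      rw [Finset.mem_Iio]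
      by_contra hc
      push_neg at hc
      have := hmono ⟨j, hj⟩ (e.symm v) hc
      rw [e.apply_symm_apply] at this
      omega
    calc (Finset.univ.filter (fun v => G.degree v < k)).card
        ≤ ((Finset.Iio (⟨j, hj⟩ : Fin n)).image e).card := Finset.card_le_card hsub
    _ = (Finset.Iio (⟨j, hj⟩ : Fin n)).card := Finset.card_image_of_injective _ e.injective
    _ = j := Fin.card_Iio _
  -- Pi7 : 2|L| >= n
  have hPi7 : n ≤ 2 * L.card := by
    have hi₀1 : 1 ≤ (n - 1) / 2 := by omega
    have hi₀2 : 2 * ((n - 1) / 2) < n := by omega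
    rcases hchv ((n - 1) / 2) hi₀1 hi₀2 with h | h
    · have h1 := hEX1 ((n - 1) / 2 - 1) (by omega) ((n - 1) / 2 + 1) h
      have h2 : Finset.univ.filter (fun v => (n - 1) / 2 + 1 ≤ G.degree v) ⊆ L := by
        intro v hv
        exact hLmem v (by have := (Finset.mem_filter.mp hv).2; omega)
      have h3 := le_trans h1 (Finset.card_le_card h2)
      omega
    · have h1 := hEX1 (n - (n - 1) / 2 - 1) (by omega) (n - (n - 1) / 2 - 1) h
      have h2 : Finset.univ.filter (fun v => n - (n - 1) / 2 - 1 ≤ G.degree v) ⊆ L := by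
        intro v hv
        exact hLmem v (by have := (Finset.mem_filter.mp hv).2; omega)
      have h3 := le_trans h1 (Finset.card_le_card h2)
      omega
  -- parity-aware lower bound on K degrees
  obtain ⟨c, hc, hcK⟩ : ∃ c : ℕ, (2 * c = n ∨ 2 * c + 1 = n) ∧ ∀ p ∈ K, c ≤ G.degree p := by
    rcases Nat.even_or_odd n with ⟨k, hk⟩ | ⟨k, hk⟩
    · exact ⟨k, Or.inl (by omega), fun p hp => by have := hdegL p (hKL hp); omega⟩
    · exact ⟨k, Or.inr (by omega), fun p hp => by have := hdegL p (hKL hp); omega⟩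
  -- BLOCK D : KEY1
  have hKEY1 : 2 ≤ K.card →
      (K.card : ℤ) * c ≤ ((K.card : ℤ) - 1) * ((I.card : ℤ) - 1) + U.card := by
    intro hl2
    obtain ⟨ℓ₀, hℓ₀K, hℓ₀u⟩ : ∃ ℓ₀ ∈ K, ℓ₀ ≠ u :=
      Finset.exists_mem_ne (by omega) u
    set Z := (U \ K).filter (fun z => 2 ≤ (G.neighborFinset z ∩ K).card) with hZ
    set S₀ := bootClosure G 2 {ℓ₀, w} with hS₀
    have hfix : bootStep G 2 S₀ = S₀ := by rw [hS₀]; exact bootStep_bootClosure G 2 _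
    have hl0S : ℓ₀ ∈ S₀ := (hseed ℓ₀ w).1
    have hwS₀ : w ∈ S₀ := (hseed ℓ₀ w).2
    have hl0w : ℓ₀ ≠ w := fun h => (hKdisjI ℓ₀ hℓ₀K) (h ▸ hwI)
    have huS₀ : u ∈ S₀ := mem_bootClosure_of_two G _ u ℓ₀ w hl0S hwS₀ hl0w
      (hclique u ℓ₀ huK hℓ₀K (fun h => hℓ₀u h.symm)) hadj
    have hKS₀ : K ⊆ S₀ := by
      intro x hx
      by_cases h1 : x = ℓ₀
      · exact h1 ▸ hl0S
      by_cases h2 : x = u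
      · exact h2 ▸ huS₀
      exact mem_bootClosure_of_two G _ x u ℓ₀ huS₀ hl0S (Ne.symm hℓ₀u)
        (hclique x u hx huK h2) (hclique x ℓ₀ hx hℓ₀K h1)
    have hZS₀ : Z ⊆ S₀ := by
      intro z hz
      obtain ⟨hz1, hz2⟩ := Finset.mem_filter.mp hz
      have h2c : 2 ≤ (G.neighborFinset z ∩ S₀).card :=
        le_trans hz2 (Finset.card_le_card (Finset.inter_subset_inter Finset.Subset.rfl hKS₀))
      have hmem := mem_bootStep_of_card G 2 S₀ z h2c
      rwa [hfix] at hmem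
    have hdisjKZ : Disjoint K Z :=
      Finset.disjoint_of_subset_right (Finset.filter_subset _ _) Finset.disjoint_sdiff
    have hwKZ : w ∉ K ∪ Z := by
      intro hmem
      rcases Finset.mem_union.mp hmem with h | h
      · exact hwU (hKU h)
      · exact hwU (Finset.mem_sdiff.mp ((Finset.filter_subset _ _) h)).1
    have hcardZ : K.card + Z.card + 1 ≤ I.card := by
      have hsub : insert w (K ∪ Z) ⊆ S₀ := by
        intro x hx
        rcases Finset.mem_insert.mp hx with h | h
        · exact h ▸ hwS₀
        rcases Finset.mem_union.mp h with h' | h'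
        · exact hKS₀ h'
        · exact hZS₀ h'
      have hc1 : (insert w (K ∪ Z)).card = K.card + Z.card + 1 := by
        rw [Finset.card_insert_of_notMem hwKZ, Finset.card_union_of_disjoint hdisjKZ]
      have hc2 := hMAX ℓ₀ w (hKL hℓ₀K) hl0w
      rw [← hS₀] at hc2
      have hc3 := Finset.card_le_card hsub
      omega
    -- counting
    have hsum1 : ∑ p ∈ K, (G.neighborFinset p ∩ U).card
        = ∑ z ∈ U \ K, (G.neighborFinset z ∩ K).card
          + ∑ z ∈ K, (G.neighborFinset z ∩ K).card := by
      rw [sum_inter_comm, ← Finset.sum_sdiff hKU]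
    have hKK : ∑ z ∈ K, (G.neighborFinset z ∩ K).card ≤ K.card * (K.card - 1) := by
      have h1 : ∀ z ∈ K, (G.neighborFinset z ∩ K).card ≤ K.card - 1 := by
        intro z hz
        have hsub : G.neighborFinset z ∩ K ⊆ K.erase z := by
          intro x hx
          obtain ⟨hx1, hx2⟩ := Finset.mem_inter.mp hx
          refine Finset.mem_erase.mpr ⟨?_, hx2⟩
          intro h; subst h
          exact G.irrefl ((SimpleGraph.mem_neighborFinset _ _ _).mp hx1)
        calc (G.neighborFinset z ∩ K).card ≤ (K.erase z).card := Finset.card_le_card hsub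
        _ = K.card - 1 := Finset.card_erase_of_mem hz
      have h2 := Finset.sum_le_card_nsmul K (fun z => (G.neighborFinset z ∩ K).card)
        (K.card - 1) h1
      simpa [smul_eq_mul] using h2
    set R := ((U \ K).filter (fun z => ¬ 2 ≤ (G.neighborFinset z ∩ K).card)).card with hR
    have hRZ : Z.card + R + K.card = U.card := by
      have h1 : Z.card + R = (U \ K).card := by
        rw [hZ, hR]
        exact Finset.card_filter_add_card_filter_not
          (p := fun z => 2 ≤ (G.neighborFinset z ∩ K).card)
      have h2 : (U \ K).card = U.card - K.card := Finset.card_sdiff_of_subset hKU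
      have h3 : K.card ≤ U.card := Finset.card_le_card hKU
      omega
    have hUK : ∑ z ∈ U \ K, (G.neighborFinset z ∩ K).card ≤ Z.card * K.card + R := by
      have hsplitsum := Finset.sum_filter_add_sum_filter_not (U \ K)
        (fun z => 2 ≤ (G.neighborFinset z ∩ K).card)
        (fun z => (G.neighborFinset z ∩ K).card)
      have hA : ∑ z ∈ (U \ K).filter (fun z => 2 ≤ (G.neighborFinset z ∩ K).card),
          (G.neighborFinset z ∩ K).card ≤ Z.card * K.card := by
        have h := Finset.sum_le_card_nsmul Z (fun z => (G.neighborFinset z ∩ K).card)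
          K.card (fun z _ => Finset.card_le_card Finset.inter_subset_right)
        rw [hZ]
        simpa [smul_eq_mul] using h
      have hB : ∑ z ∈ (U \ K).filter (fun z => ¬ 2 ≤ (G.neighborFinset z ∩ K).card),
          (G.neighborFinset z ∩ K).card ≤ R := by
        have h := Finset.sum_le_card_nsmul
          ((U \ K).filter (fun z => ¬ 2 ≤ (G.neighborFinset z ∩ K).card))
          (fun z => (G.neighborFinset z ∩ K).card) 1
          (fun z hz => by
            have h' := (Finset.mem_filter.mp hz).2
            show (G.neighborFinset z ∩ K).card ≤ 1
            omega)
        rw [hR]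
        simpa [smul_eq_mul] using h
      exact le_trans (le_of_eq hsplitsum.symm) (Nat.add_le_add hA hB)
    have hdeg_lb : K.card * c ≤ ∑ p ∈ K, G.degree p := by
      have h := Finset.card_nsmul_le_sum K (fun p => G.degree p) c hcK
      simpa [smul_eq_mul] using h
    have hdeg_ub : ∑ p ∈ K, G.degree p ≤ K.card + ∑ p ∈ K, (G.neighborFinset p ∩ U).card := by
      have h1 : ∑ p ∈ K, G.degree p
          = ∑ p ∈ K, (G.neighborFinset p ∩ I).card + ∑ p ∈ K, (G.neighborFinset p ∩ U).card := by
        rw [← Finset.sum_add_distrib]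
        exact Finset.sum_congr rfl (fun p _ => hsplit p)
      have h2 : ∑ p ∈ K, (G.neighborFinset p ∩ I).card ≤ K.card := by
        have h := Finset.sum_le_card_nsmul K (fun p => (G.neighborFinset p ∩ I).card) 1
          (fun p hp => hPi1 p (hKdisjI p hp))
        simpa [smul_eq_mul] using h
      omega
    -- assemble over ℤ
    have hnat : K.card * c ≤ K.card + K.card * (K.card - 1) + Z.card * K.card + R := by omega
    have hKge : (1 : ℤ) ≤ (K.card : ℤ) := by exact_mod_cast hlam1
    have hZKm : (K.card : ℤ) + Z.card + 1 ≤ I.card := by exact_mod_cast hcardZ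
    have hRZ' : (Z.card : ℤ) + R + K.card = U.card := by exact_mod_cast hRZ
    have hnat' : (K.card : ℤ) * c
        ≤ K.card + K.card * ((K.card : ℤ) - 1) + Z.card * K.card + R := by
      have hc1 : ((K.card - 1 : ℕ) : ℤ) = (K.card : ℤ) - 1 := by
        have h1 : 1 ≤ K.card := hlam1
        omega
      have hc2 : (K.card : ℤ) * c
          ≤ (K.card : ℤ) + K.card * ((K.card - 1 : ℕ) : ℤ) + Z.card * K.card + R := by
        exact_mod_cast hnat
      rw [hc1] at hc2
      exact hc2
    have h2 : (K.card : ℤ) + Z.card ≤ (I.card : ℤ) - 1 := by linarith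
    have h3 : (0 : ℤ) ≤ (K.card : ℤ) - 1 := by linarith
    calc (K.card : ℤ) * c
        ≤ K.card + K.card * ((K.card : ℤ) - 1) + Z.card * K.card + R := hnat'
    _ = ((K.card : ℤ) - 1) * ((K.card : ℤ) + Z.card) + (Z.card + R + K.card) := by ring
    _ ≤ ((K.card : ℤ) - 1) * ((I.card : ℤ) - 1) + U.card := by
        have h4 := mul_le_mul_of_nonneg_left h2 h3
        linarith
  -- t ≥ 0
  have h2m : 2 * I.card ≤ n + 1 := by
    have h1 := hdegL u huL
    have h2 := hPi3 u huU
    omega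
  have hdIle : ∀ x ∈ I, (G.neighborFinset x ∩ I).card ≤ I.card - 1 := by
    intro x hx
    have hsub : G.neighborFinset x ∩ I ⊆ I.erase x := by
      intro z hz
      obtain ⟨hz1, hz2⟩ := Finset.mem_inter.mp hz
      refine Finset.mem_erase.mpr ⟨?_, hz2⟩
      intro h; subst h
      exact G.irrefl ((SimpleGraph.mem_neighborFinset _ _ _).mp hz1)
    calc (G.neighborFinset x ∩ I).card ≤ (I.erase x).card := Finset.card_le_card hsub
    _ = I.card - 1 := Finset.card_erase_of_mem hx
  by_cases ht0 : 2 * I.card = n + 1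
  · -- t = 0
    have hodd : 2 * c + 1 = n := by
      rcases hc with hce | hco
      · omega
      · exact hco
    have hs6 : 6 ≤ U.card := by omega
    have hsm : U.card + 1 = I.card := by omega
    have hKstruct : ∀ ℓ ∈ K, G.neighborFinset ℓ ∩ U = U.erase ℓ := by
      intro ℓ hℓ
      have hd1 : c ≤ G.degree ℓ := hcK ℓ hℓ
      have hd2 : G.degree ℓ ≤ U.card := hPi3 ℓ (hKU hℓ)
      have hι := hPi1 ℓ (hKdisjI ℓ hℓ)
      have hsp := hsplit ℓ
      have hsub : G.neighborFinset ℓ ∩ U ⊆ U.erase ℓ := by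
        intro x hx
        obtain ⟨hx1, hx2⟩ := Finset.mem_inter.mp hx
        refine Finset.mem_erase.mpr ⟨?_, hx2⟩
        intro hxz; subst hxz
        exact G.irrefl ((SimpleGraph.mem_neighborFinset _ _ _).mp hx1)
      have hUe : (U.erase ℓ).card = U.card - 1 := Finset.card_erase_of_mem (hKU hℓ)
      have hsc := Finset.card_le_card hsub
      refine Finset.eq_of_subset_of_card_le hsub ?_
      rw [hUe]
      omega
    have huniv : ∀ ℓ ∈ K, ∀ z ∈ U, z ≠ ℓ → G.Adj ℓ z := by
      intro ℓ hℓ z hz hzℓ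
      have h := hKstruct ℓ hℓ
      have hmem : z ∈ G.neighborFinset ℓ ∩ U := by
        rw [h]; exact Finset.mem_erase.mpr ⟨hzℓ, hz⟩
      exact (SimpleGraph.mem_neighborFinset _ _ _).mp (Finset.mem_inter.mp hmem).1
    by_cases hl2 : 2 ≤ K.card
    · -- 12b : at least two L-vertices in U
      obtain ⟨ℓ₀, hℓ₀K, hℓ₀u⟩ := Finset.exists_mem_ne (by omega : 1 < K.card) u
      have hl0w : ℓ₀ ≠ w := fun h => (hKdisjI ℓ₀ hℓ₀K) (h ▸ hwI)
      have hl0L : ℓ₀ ∈ L := hKL hℓ₀K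
      have hfix0 : bootStep G 2 (bootClosure G 2 {ℓ₀, w}) = bootClosure G 2 {ℓ₀, w} :=
        bootStep_bootClosure G 2 _
      have huS₀ : u ∈ bootClosure G 2 {ℓ₀, w} :=
        mem_bootClosure_of_two G _ u ℓ₀ w (hseed ℓ₀ w).1 (hseed ℓ₀ w).2 hl0w
          (hclique u ℓ₀ huK hℓ₀K (fun h => hℓ₀u h.symm)) hadj
      have hUS₀ : ∀ z ∈ U, z ∈ bootClosure G 2 {ℓ₀, w} := by
        intro z hz
        by_cases h1 : z = ℓ₀
        · exact h1 ▸ (hseed ℓ₀ w).1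
        by_cases h2 : z = u
        · exact h2 ▸ huS₀
        exact mem_bootClosure_of_two G _ z u ℓ₀ huS₀ (hseed ℓ₀ w).1 (Ne.symm hℓ₀u)
          (huniv u huK z hz h2).symm (huniv ℓ₀ hℓ₀K z hz h1).symm
      have hS₀eq : bootClosure G 2 {ℓ₀, w} = insert w U := by
        have hsub : insert w U ⊆ bootClosure G 2 {ℓ₀, w} := by
          intro x hx
          rcases Finset.mem_insert.mp hx with h | h
          · exact h ▸ (hseed ℓ₀ w).2
          · exact hUS₀ x h
        have hc2 := hMAX ℓ₀ w hl0L hl0w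
        have hc1 : (insert w U).card = U.card + 1 := Finset.card_insert_of_notMem hwU
        exact (Finset.eq_of_subset_of_card_le hsub (by omega)).symm
      have hFACTW : ∀ x ∈ I, x ≠ w → (G.neighborFinset x ∩ U).card ≤ 1 ∧
          (G.Adj x w → (G.neighborFinset x ∩ U).card = 0) := by
        intro x hxI hxw
        have hxS : x ∉ bootClosure G 2 {ℓ₀, w} := by
          rw [hS₀eq]
          intro h
          rcases Finset.mem_insert.mp h with h' | h'
          · exact hxw h'
          · exact (hmem_U x).mp h' hxI
        have hle : (G.neighborFinset x ∩ insert w U).card ≤ 1 := by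
          by_contra hcon
          push_neg at hcon
          have h2' : 2 ≤ (G.neighborFinset x ∩ bootClosure G 2 {ℓ₀, w}).card := by
            rw [hS₀eq]; omega
          have hmem := mem_bootStep_of_card G 2 _ x h2'
          rw [hfix0] at hmem
          exact hxS hmem
        constructor
        · exact le_trans (Finset.card_le_card
            (Finset.inter_subset_inter Finset.Subset.rfl (Finset.subset_insert w U))) hle
        · intro hadjxw
          have hins : G.neighborFinset x ∩ insert w U = insert w (G.neighborFinset x ∩ U) :=
            Finset.inter_insert_of_mem ((SimpleGraph.mem_neighborFinset _ _ _).mpr hadjxw)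
          have hwn : w ∉ G.neighborFinset x ∩ U := fun h => hwU (Finset.mem_inter.mp h).2
          rw [hins, Finset.card_insert_of_notMem hwn] at hle
          omega
      have hclass : ∀ x ∈ (L ∩ I).erase w,
          ((G.neighborFinset x ∩ U).card = 0 ∧ (∀ y ∈ I, y ≠ x → G.Adj x y)) ∨
          ((G.neighborFinset x ∩ U).card = 1 ∧ ¬ G.Adj x w ∧
            ∀ y ∈ I, y ≠ x → y ≠ w → G.Adj x y) := by
        intro x hx
        obtain ⟨hxw, hxLI⟩ := Finset.mem_erase.mp hx
        obtain ⟨hxL, hxI⟩ := Finset.mem_inter.mp hxLI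
        obtain ⟨hFW1, hFW2⟩ := hFACTW x hxI hxw
        have hdeg := hdegL x hxL
        have hsp := hsplit x
        by_cases he0 : (G.neighborFinset x ∩ U).card = 0
        · left
          exact ⟨he0, hfull_of x hxI (by omega)⟩
        · right
          have he1' : (G.neighborFinset x ∩ U).card = 1 := by omega
          have hnadj : ¬ G.Adj x w := fun hadjxw => he0 (hFW2 hadjxw)
          refine ⟨he1', hnadj, ?_⟩
          have hsub : G.neighborFinset x ∩ I ⊆ (I.erase w).erase x := by
            intro z hz
            obtain ⟨hz1, hz2⟩ := Finset.mem_inter.mp hz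
            refine Finset.mem_erase.mpr ⟨?_, Finset.mem_erase.mpr ⟨?_, hz2⟩⟩
            · intro h; subst h
              exact G.irrefl ((SimpleGraph.mem_neighborFinset _ _ _).mp hz1)
            · intro h; subst h
              exact hnadj ((SimpleGraph.mem_neighborFinset _ _ _).mp hz1)
          have hxIw : x ∈ I.erase w := Finset.mem_erase.mpr ⟨hxw, hxI⟩
          have hcard2 : ((I.erase w).erase x).card = I.card - 1 - 1 := by
            rw [Finset.card_erase_of_mem hxIw, Finset.card_erase_of_mem hwI]
          have heqrow : G.neighborFinset x ∩ I = (I.erase w).erase x := by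
            apply Finset.eq_of_subset_of_card_le hsub
            rw [hcard2]
            omega
          intro y hy hyx hyw
          have hmem : y ∈ G.neighborFinset x ∩ I := by
            rw [heqrow]
            exact Finset.mem_erase.mpr ⟨hyx, Finset.mem_erase.mpr ⟨hyw, hy⟩⟩
          exact (SimpleGraph.mem_neighborFinset _ _ _).mp (Finset.mem_inter.mp hmem).1
      have hKILL1 : ∀ x₁ ∈ (L ∩ I).erase w, ∀ x₂ ∈ (L ∩ I).erase w, x₁ ≠ x₂ →
          (G.neighborFinset x₁ ∩ U).card = 1 → (G.neighborFinset x₂ ∩ U).card = 1 → False := by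
        intro x₁ h1 x₂ h2 h12 he1 he2
        rcases hclass x₁ h1 with ⟨he0, _⟩ | ⟨_, hnw1, hrow1⟩
        · omega
        rcases hclass x₂ h2 with ⟨he0, _⟩ | ⟨_, hnw2, hrow2⟩
        · omega
        obtain ⟨hx₁w, hx₁LI⟩ := Finset.mem_erase.mp h1
        obtain ⟨hx₁L, hx₁I⟩ := Finset.mem_inter.mp hx₁LI
        obtain ⟨hx₂w, hx₂LI⟩ := Finset.mem_erase.mp h2
        obtain ⟨hx₂L, hx₂I⟩ := Finset.mem_inter.mp hx₂LI
        obtain ⟨p₁, hp₁⟩ := Finset.card_eq_one.mp he1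
        obtain ⟨p₂, hp₂⟩ := Finset.card_eq_one.mp he2
        have hp₁mem : p₁ ∈ G.neighborFinset x₁ ∩ U := by
          rw [hp₁]; exact Finset.mem_singleton_self p₁
        have hp₂mem : p₂ ∈ G.neighborFinset x₂ ∩ U := by
          rw [hp₂]; exact Finset.mem_singleton_self p₂
        have hp₁U : p₁ ∈ U := (Finset.mem_inter.mp hp₁mem).2
        have hp₂U : p₂ ∈ U := (Finset.mem_inter.mp hp₂mem).2
        have hp₁adj : G.Adj x₁ p₁ :=
          (SimpleGraph.mem_neighborFinset _ _ _).mp (Finset.mem_inter.mp hp₁mem).1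
        have hp₂adj : G.Adj x₂ p₂ :=
          (SimpleGraph.mem_neighborFinset _ _ _).mp (Finset.mem_inter.mp hp₂mem).1
        have hp₁u : p₁ ≠ u := by
          intro h
          have hadj' : G.Adj x₁ u := h ▸ hp₁adj
          have hmem : x₁ ∈ G.neighborFinset u ∩ I := Finset.mem_inter.mpr
            ⟨(SimpleGraph.mem_neighborFinset _ _ _).mpr hadj'.symm, hx₁I⟩
          rw [hNuI] at hmem
          exact hx₁w (Finset.mem_singleton.mp hmem)
        have hux1 : u ≠ x₁ := fun h => huI (h ▸ hx₁I)
        have hp1S : p₁ ∈ bootClosure G 2 {u, x₁} :=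
          mem_bootClosure_of_two G _ p₁ u x₁ (hseed u x₁).1 (hseed u x₁).2 hux1
            (huniv u huK p₁ hp₁U hp₁u).symm hp₁adj.symm
        have hUS : ∀ z ∈ U, z ∈ bootClosure G 2 {u, x₁} := by
          intro z hz
          by_cases hzu : z = u
          · exact hzu ▸ (hseed u x₁).1
          by_cases hzp : z = p₁
          · exact hzp ▸ hp1S
          by_cases hpK : p₁ ∈ K
          · exact mem_bootClosure_of_two G _ z u p₁ (hseed u x₁).1 hp1S (Ne.symm hp₁u)
              (huniv u huK z hz hzu).symm (huniv p₁ hpK z hz hzp).symm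
          · obtain ⟨ℓ₃, hℓ₃K, hℓ₃u⟩ := Finset.exists_mem_ne (by omega : 1 < K.card) u
            have hℓ₃p : ℓ₃ ≠ p₁ := fun h => hpK (h ▸ hℓ₃K)
            have hl3S : ℓ₃ ∈ bootClosure G 2 {u, x₁} :=
              mem_bootClosure_of_two G _ ℓ₃ u p₁ (hseed u x₁).1 hp1S (Ne.symm hp₁u)
                (hclique ℓ₃ u hℓ₃K huK hℓ₃u) (huniv ℓ₃ hℓ₃K p₁ hp₁U (Ne.symm hℓ₃p))
            by_cases hzl : z = ℓ₃
            · exact hzl ▸ hl3S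
            · exact mem_bootClosure_of_two G _ z u ℓ₃ (hseed u x₁).1 hl3S (Ne.symm hℓ₃u)
                (huniv u huK z hz hzu).symm (huniv ℓ₃ hℓ₃K z hz hzl).symm
        have hx1p2 : x₁ ≠ p₂ := fun h => ((hmem_U p₂).mp hp₂U) (h ▸ hx₁I)
        have hx2S : x₂ ∈ bootClosure G 2 {u, x₁} :=
          mem_bootClosure_of_two G _ x₂ x₁ p₂ (hseed u x₁).2 (hUS p₂ hp₂U) hx1p2
            (hrow2 x₁ hx₁I h12 hx₁w) hp₂adj
        have hsub : insert x₁ (insert x₂ U) ⊆ bootClosure G 2 {u, x₁} := by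
          intro x hx
          rcases Finset.mem_insert.mp hx with h | h
          · exact h ▸ (hseed u x₁).2
          rcases Finset.mem_insert.mp h with h' | h'
          · exact h' ▸ hx2S
          · exact hUS x h'
        have hcd : (insert x₁ (insert x₂ U)).card = U.card + 2 := by
          rw [Finset.card_insert_of_notMem, Finset.card_insert_of_notMem]
          · exact fun h => ((hmem_U x₂).mp h) hx₂I
          · intro h
            rcases Finset.mem_insert.mp h with h' | h'
            · exact h12 h'
            · exact ((hmem_U x₁).mp h') hx₁I
        have hc1 := Finset.card_le_card hsub
        have hc2 := hMAX u x₁ huL hux1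
        omega
      have hKILL0 : ∀ x₁ ∈ (L ∩ I).erase w, ∀ x₂ ∈ (L ∩ I).erase w, x₁ ≠ x₂ →
          ¬ (G.neighborFinset x₁ ∩ U).card = 1 → ¬ (G.neighborFinset x₂ ∩ U).card = 1 →
          False := by
        intro x₁ h1 x₂ h2 h12 he1 he2
        rcases hclass x₁ h1 with ⟨he1', hf1⟩ | ⟨he1', _⟩
        swap
        · exact he1 he1'
        rcases hclass x₂ h2 with ⟨he2', hf2⟩ | ⟨he2', _⟩
        swap
        · exact he2 he2'
        obtain ⟨hx₁w, hx₁LI⟩ := Finset.mem_erase.mp h1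
        obtain ⟨hx₂w, hx₂LI⟩ := Finset.mem_erase.mp h2
        exact hKILLFULL x₁ x₂ (Finset.mem_inter.mp hx₁LI).2 (Finset.mem_inter.mp hx₂LI).2
          h12 hx₁w hx₂w hf1 hf2
      have hLIle : ((L ∩ I).erase w).card ≤ 2 := by
        have hF1le : (((L ∩ I).erase w).filter
            (fun x => (G.neighborFinset x ∩ U).card = 1)).card ≤ 1 := by
          by_contra hc'
          push_neg at hc'
          obtain ⟨x₁, hx₁, x₂, hx₂, h12⟩ := Finset.one_lt_card.mp hc'
          exact hKILL1 x₁ (Finset.filter_subset _ _ hx₁) x₂ (Finset.filter_subset _ _ hx₂)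
            h12 (Finset.mem_filter.mp hx₁).2 (Finset.mem_filter.mp hx₂).2
        have hF0le : (((L ∩ I).erase w).filter
            (fun x => ¬ (G.neighborFinset x ∩ U).card = 1)).card ≤ 1 := by
          by_contra hc'
          push_neg at hc'
          obtain ⟨x₁, hx₁, x₂, hx₂, h12⟩ := Finset.one_lt_card.mp hc'
          exact hKILL0 x₁ (Finset.filter_subset _ _ hx₁) x₂ (Finset.filter_subset _ _ hx₂)
            h12 (Finset.mem_filter.mp hx₁).2 (Finset.mem_filter.mp hx₂).2
        have hpart := Finset.card_filter_add_card_filter_not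
          (s := (L ∩ I).erase w) (p := fun x => (G.neighborFinset x ∩ U).card = 1)
        omega
      have hLIle3 : (L ∩ I).card ≤ 3 := by
        by_cases hwLI : w ∈ L ∩ I
        · have := Finset.card_erase_of_mem hwLI
          omega
        · rw [Finset.erase_eq_of_notMem hwLI] at hLIle
          omega
      rcases hchv (U.card - 1) (by omega) (by omega) with hA | hB
      · -- few low-degree vertices
        have h1 := hEX2 (U.card - 1 - 1) (by omega) (U.card - 1 + 1) hA
        have hsubL : (U \ K) ∪ (I \ (L ∩ I))
            ⊆ Finset.univ.filter (fun v => G.degree v < U.card - 1 + 1) := by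
          intro z hz
          refine Finset.mem_filter.mpr ⟨Finset.mem_univ _, ?_⟩
          rcases Finset.mem_union.mp hz with h | h
          · obtain ⟨hzU, hzK⟩ := Finset.mem_sdiff.mp h
            have hzL : z ∉ L := fun hL' => hzK (Finset.mem_inter.mpr ⟨hL', hzU⟩)
            have hnd : ¬ (n - 1 ≤ 2 * G.degree z) := fun hc' => hzL (by
              rw [hL]; exact Finset.mem_filter.mpr ⟨Finset.mem_univ _, hc'⟩)
            omega
          · obtain ⟨hzI, hzLI⟩ := Finset.mem_sdiff.mp h
            have hzL : z ∉ L := fun hL' => hzLI (Finset.mem_inter.mpr ⟨hL', hzI⟩)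
            have hnd : ¬ (n - 1 ≤ 2 * G.degree z) := fun hc' => hzL (by
              rw [hL]; exact Finset.mem_filter.mpr ⟨Finset.mem_univ _, hc'⟩)
            omega
        have hdisjUI : Disjoint (U \ K) (I \ (L ∩ I)) := by
          have hd : Disjoint U I := by
            rw [hU]; exact Finset.sdiff_disjoint
          exact Finset.disjoint_of_subset_left Finset.sdiff_subset
            (Finset.disjoint_of_subset_right Finset.sdiff_subset hd)
        have hcards := Finset.card_le_card hsubL
        rw [Finset.card_union_of_disjoint hdisjUI, Finset.card_sdiff_of_subset hKU,
          Finset.card_sdiff_of_subset Finset.inter_subset_right] at hcards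
        have hKle : K.card ≤ U.card := Finset.card_le_card hKU
        have hKcard : K.card = U.card := by omega
        have hKeqU : K = U := Finset.eq_of_subset_of_card_le hKU (by omega)
        have hwLI : w ∈ L ∩ I := by
          by_contra hw'
          rw [Finset.erase_eq_of_notMem hw'] at hLIle
          omega
        have herase2 : 1 < ((L ∩ I).erase w).card := by
          have := Finset.card_erase_of_mem hwLI
          omega
        -- final configuration kill
        have hwL : w ∈ L := (Finset.mem_inter.mp hwLI).1
        have humem : u ∈ G.neighborFinset w ∩ U :=
          Finset.mem_inter.mpr ⟨(SimpleGraph.mem_neighborFinset _ _ _).mpr hwu, huU⟩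
        have hFINAL : ∀ a b : V, a ∈ (L ∩ I).erase w → b ∈ (L ∩ I).erase w → a ≠ b →
            (G.neighborFinset a ∩ U).card = 0 → (∀ y ∈ I, y ≠ a → G.Adj a y) →
            (G.neighborFinset b ∩ U).card = 1 → ¬ G.Adj b w →
            (∀ y ∈ I, y ≠ b → y ≠ w → G.Adj b y) → False := by
          intro a b ha hb hab hae hafull hbe hbnw hbrow
          obtain ⟨haw, haLI⟩ := Finset.mem_erase.mp ha
          obtain ⟨haL, haI⟩ := Finset.mem_inter.mp haLI
          obtain ⟨hbw, hbLI⟩ := Finset.mem_erase.mp hb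
          obtain ⟨hbL, hbI⟩ := Finset.mem_inter.mp hbLI
          have hua : u ≠ a := fun h => huI (h ▸ haI)
          have hwS : w ∈ bootClosure G 2 {u, a} :=
            mem_bootClosure_of_two G _ w u a (hseed u a).1 (hseed u a).2 hua hwu
              (hafull w hwI (Ne.symm haw)).symm
          have hmaxS := hMAX u a huL hua
          obtain ⟨pb, hpb⟩ := Finset.card_eq_one.mp hbe
          have hpbmem : pb ∈ G.neighborFinset b ∩ U := by
            rw [hpb]; exact Finset.mem_singleton_self pb
          have hpbU : pb ∈ U := (Finset.mem_inter.mp hpbmem).2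
          have hpbadj : G.Adj b pb :=
            (SimpleGraph.mem_neighborFinset _ _ _).mp (Finset.mem_inter.mp hpbmem).1
          have habI : G.Adj b a := hbrow a haI hab haw
          by_cases hcw : 2 ≤ (G.neighborFinset w ∩ U).card
          · obtain ⟨z₂, hz₂, hz₂u⟩ := Finset.exists_mem_ne (s := G.neighborFinset w ∩ U) (by omega) u
            have hz₂U : z₂ ∈ U := (Finset.mem_inter.mp hz₂).2
            have hz₂w : G.Adj w z₂ :=
              (SimpleGraph.mem_neighborFinset _ _ _).mp (Finset.mem_inter.mp hz₂).1
            have hz₂K : z₂ ∈ K := by rw [hKeqU]; exact hz₂U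
            have hz2S : z₂ ∈ bootClosure G 2 {u, a} :=
              mem_bootClosure_of_two G _ z₂ u w (hseed u a).1 hwS huw
                (huniv u huK z₂ hz₂U hz₂u).symm hz₂w.symm
            have hUS : ∀ z ∈ U, z ∈ bootClosure G 2 {u, a} := by
              intro z hz
              by_cases h1 : z = u
              · exact h1 ▸ (hseed u a).1
              by_cases h2 : z = z₂
              · exact h2 ▸ hz2S
              exact mem_bootClosure_of_two G _ z u z₂ (hseed u a).1 hz2S (Ne.symm hz₂u)
                (huniv u huK z hz h1).symm (huniv z₂ hz₂K z hz h2).symm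
            have habpb : a ≠ pb := fun h => ((hmem_U pb).mp hpbU) (h ▸ haI)
            have hbS : b ∈ bootClosure G 2 {u, a} :=
              mem_bootClosure_of_two G _ b a pb (hseed u a).2 (hUS pb hpbU) habpb
                habI hpbadj
            have hsub : insert a (insert w (insert b U)) ⊆ bootClosure G 2 {u, a} := by
              intro x hx
              rcases Finset.mem_insert.mp hx with h | h
              · exact h ▸ (hseed u a).2
              rcases Finset.mem_insert.mp h with h' | h'
              · exact h' ▸ hwS
              rcases Finset.mem_insert.mp h' with h'' | h''
              · exact h'' ▸ hbS
              · exact hUS x h''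
            have hcd : (insert a (insert w (insert b U))).card = U.card + 3 := by
              rw [Finset.card_insert_of_notMem, Finset.card_insert_of_notMem,
                Finset.card_insert_of_notMem]
              · exact fun h => ((hmem_U b).mp h) hbI
              · intro h
                rcases Finset.mem_insert.mp h with h' | h'
                · exact hbw h'.symm
                · exact ((hmem_U w).mp h') hwI
              · intro h
                rcases Finset.mem_insert.mp h with h' | h'
                · exact haw h'
                rcases Finset.mem_insert.mp h' with h'' | h''
                · exact hab h''
                · exact ((hmem_U a).mp h'') haI
            have hc1 := Finset.card_le_card hsub
            omega
          · -- e(w, U) = 1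
            have hNwU : G.neighborFinset w ∩ U = {u} := by
              apply Finset.Subset.antisymm
              · intro x hx
                rw [Finset.mem_singleton]
                by_contra hxu
                exact hcw (Finset.one_lt_card.mpr ⟨x, hx, u, humem, hxu⟩)
              · intro x hx
                rw [Finset.mem_singleton.mp hx]
                exact humem
            have hcw1 : (G.neighborFinset w ∩ U).card = 1 := by
              rw [hNwU]; exact Finset.card_singleton u
            have hwdeg := hdegL w hwL
            have hspw := hsplit w
            have hwnb : ¬ G.Adj w b := fun h => hbnw h.symm
            have hwrow : ∀ y ∈ I, y ≠ w → y ≠ b → G.Adj w y := by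
              have hsub : G.neighborFinset w ∩ I ⊆ (I.erase b).erase w := by
                intro z hz
                obtain ⟨hz1, hz2⟩ := Finset.mem_inter.mp hz
                refine Finset.mem_erase.mpr ⟨?_, Finset.mem_erase.mpr ⟨?_, hz2⟩⟩
                · intro h; subst h
                  exact G.irrefl ((SimpleGraph.mem_neighborFinset _ _ _).mp hz1)
                · intro h; subst h
                  exact hwnb ((SimpleGraph.mem_neighborFinset _ _ _).mp hz1)
              have hbIe : b ∈ I.erase b → False := fun h => (Finset.mem_erase.mp h).1 rfl
              have hcard2 : ((I.erase b).erase w).card = I.card - 1 - 1 := by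
                rw [Finset.card_erase_of_mem (Finset.mem_erase.mpr ⟨Ne.symm hbw, hwI⟩),
                  Finset.card_erase_of_mem hbI]
              have heqrow : G.neighborFinset w ∩ I = (I.erase b).erase w := by
                apply Finset.eq_of_subset_of_card_le hsub
                rw [hcard2]
                omega
              intro y hy hyw hyb
              have hmem : y ∈ G.neighborFinset w ∩ I := by
                rw [heqrow]
                exact Finset.mem_erase.mpr ⟨hyw, Finset.mem_erase.mpr ⟨hyb, hy⟩⟩
              exact (SimpleGraph.mem_neighborFinset _ _ _).mp (Finset.mem_inter.mp hmem).1
            have hIS : ∀ y ∈ I, y ≠ b → y ∈ bootClosure G 2 {u, a} := by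
              intro y hy hyb
              by_cases hya : y = a
              · exact hya ▸ (hseed u a).2
              by_cases hyw : y = w
              · exact hyw ▸ hwS
              exact mem_bootClosure_of_two G _ y a w (hseed u a).2 hwS (fun h => haw h)
                (hafull y hy hya).symm (hwrow y hy hyw hyb).symm
            have hy₀ : (((I.erase w).erase a).erase b).Nonempty := by
              apply Finset.card_pos.mp
              have hb' : b ∈ (I.erase w).erase a :=
                Finset.mem_erase.mpr ⟨hab.symm, Finset.mem_erase.mpr ⟨hbw, hbI⟩⟩
              have ha' : a ∈ I.erase w := Finset.mem_erase.mpr ⟨haw, haI⟩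
              rw [Finset.card_erase_of_mem hb', Finset.card_erase_of_mem ha',
                Finset.card_erase_of_mem hwI]
              omega
            obtain ⟨y₀, hy₀m⟩ := hy₀
            obtain ⟨hy₀b, hy₀m'⟩ := Finset.mem_erase.mp hy₀m
            obtain ⟨hy₀a, hy₀m''⟩ := Finset.mem_erase.mp hy₀m'
            obtain ⟨hy₀w, hy₀I⟩ := Finset.mem_erase.mp hy₀m''
            have hay₀ : a ≠ y₀ := fun h => hy₀a h.symm
            have hbS : b ∈ bootClosure G 2 {u, a} :=
              mem_bootClosure_of_two G _ b a y₀ (hseed u a).2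
                (hIS y₀ hy₀I hy₀b) hay₀ habI (hbrow y₀ hy₀I hy₀b hy₀w)
            have hsub : insert u I ⊆ bootClosure G 2 {u, a} := by
              intro x hx
              rcases Finset.mem_insert.mp hx with h | h
              · exact h ▸ (hseed u a).1
              by_cases hxb : x = b
              · exact hxb ▸ hbS
              · exact hIS x h hxb
            have hcd : (insert u I).card = I.card + 1 := Finset.card_insert_of_notMem huI
            have hc1 := Finset.card_le_card hsub
            omega
        obtain ⟨a, ha, b, hb, hab⟩ := Finset.one_lt_card.mp herase2
        rcases hclass a ha with ⟨hae, hafull⟩ | ⟨hae, hanw, harow⟩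
        · rcases hclass b hb with ⟨hbe, hbfull⟩ | ⟨hbe, hbnw, hbrow⟩
          · exact hKILL0 a ha b hb hab (by omega) (by omega)
          · exact hFINAL a b ha hb hab hae hafull hbe hbnw hbrow
        · rcases hclass b hb with ⟨hbe, hbfull⟩ | ⟨hbe, hbnw, hbrow⟩
          · exact hFINAL b a hb ha (Ne.symm hab) hbe hbfull hae hanw harow
          · exact hKILL1 a ha b hb hab hae hbe
      · -- hB : many high degree vertices, all must equal w
        have h1 := hEX1 (n - (U.card - 1) - 1) (by omega) (n - (U.card - 1) - 1) hB
        have hsubH : Finset.univ.filter (fun v => n - (U.card - 1) - 1 ≤ G.degree v)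
            ⊆ {w} := by
          intro v hv
          have hdv := (Finset.mem_filter.mp hv).2
          have hvI : v ∈ I := by
            by_contra hvI
            have := hPi3 v ((hmem_U v).mpr hvI)
            omega
          rw [Finset.mem_singleton]
          by_contra hvw
          obtain ⟨hFW1, hFW2⟩ := hFACTW v hvI hvw
          have hsp := hsplit v
          have hdI := hdIle v hvI
          by_cases hadjvw : G.Adj v w
          · have := hFW2 hadjvw
            omega
          · have hsub2 : G.neighborFinset v ∩ I ⊆ (I.erase w).erase v := by
              intro z hz
              obtain ⟨hz1, hz2⟩ := Finset.mem_inter.mp hz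
              refine Finset.mem_erase.mpr ⟨?_, Finset.mem_erase.mpr ⟨?_, hz2⟩⟩
              · intro h; subst h
                exact G.irrefl ((SimpleGraph.mem_neighborFinset _ _ _).mp hz1)
              · intro h; subst h
                exact hadjvw ((SimpleGraph.mem_neighborFinset _ _ _).mp hz1)
            have hc2 : ((I.erase w).erase v).card = I.card - 1 - 1 := by
              rw [Finset.card_erase_of_mem (Finset.mem_erase.mpr ⟨hvw, hvI⟩),
                Finset.card_erase_of_mem hwI]
            have hc3 := Finset.card_le_card hsub2
            omega
        have hc4 := Finset.card_le_card hsubH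
        rw [Finset.card_singleton] at hc4
        omega
    · -- 12a : lam = 1
      have hKsing : ∀ z ∈ U, z ≠ u → z ∉ L := by
        intro z hz hzu hzL
        exact hl2 (Finset.one_lt_card.mpr ⟨z, Finset.mem_inter.mpr ⟨hzL, hz⟩, u, huK, hzu⟩)
      rcases hchv (U.card - 1) (by omega) (by omega) with hA | hB
      · have h1 := hEX2 (U.card - 1 - 1) (by omega) (U.card - 1 + 1) hA
        have hsub : U.erase u ⊆ Finset.univ.filter (fun v => G.degree v < U.card - 1 + 1) := by
          intro z hz
          obtain ⟨hzu, hzU⟩ := Finset.mem_erase.mp hz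
          have hzL := hKsing z hzU hzu
          have hnd : ¬ (n - 1 ≤ 2 * G.degree z) := fun hc' => hzL (by
            rw [hL]; exact Finset.mem_filter.mpr ⟨Finset.mem_univ _, hc'⟩)
          refine Finset.mem_filter.mpr ⟨Finset.mem_univ _, ?_⟩
          omega
        have h2 := Finset.card_le_card hsub
        rw [Finset.card_erase_of_mem huU] at h2
        omega
      · have h1 := hEX1 (n - (U.card - 1) - 1) (by omega) (n - (U.card - 1) - 1) hB
        have hHI : ∀ v ∈ Finset.univ.filter (fun v => n - (U.card - 1) - 1 ≤ G.degree v),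
            v ∈ I := by
          intro v hv
          have hdv := (Finset.mem_filter.mp hv).2
          by_contra hvI
          have := hPi3 v ((hmem_U v).mpr hvI)
          omega
        have hHc : U.card ≤ (Finset.univ.filter
            (fun v => n - (U.card - 1) - 1 ≤ G.degree v)).card := by
          have h2' := h1
          omega
        have hHe1 : ∀ v ∈ Finset.univ.filter (fun v => n - (U.card - 1) - 1 ≤ G.degree v),
            1 ≤ (G.neighborFinset v ∩ U).card := by
          intro v hv
          have hdv := (Finset.mem_filter.mp hv).2
          have hsp := hsplit v
          have hdI := hdIle v (hHI v hv)
          omega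
        have hHsum : ∑ x ∈ Finset.univ.filter (fun v => n - (U.card - 1) - 1 ≤ G.degree v),
            (G.neighborFinset x ∩ U).card ≤ U.card := by
          refine le_trans (Finset.sum_le_sum_of_subset ?_) heIU
          intro v hv
          exact hHI v hv
        have hHfull : ∀ v ∈ Finset.univ.filter (fun v => n - (U.card - 1) - 1 ≤ G.degree v),
            ∀ y ∈ I, y ≠ v → G.Adj v y := by
          intro v hv
          apply hfull_of v (hHI v hv)
          have he_le : (G.neighborFinset v ∩ U).card ≤ 1 := by
            by_contra hcon
            push_neg at hcon
            have h2' : ∑ x ∈ (Finset.univ.filter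
                (fun v => n - (U.card - 1) - 1 ≤ G.degree v)).erase v,
                (G.neighborFinset x ∩ U).card + (G.neighborFinset v ∩ U).card
                = ∑ x ∈ Finset.univ.filter (fun v => n - (U.card - 1) - 1 ≤ G.degree v),
                  (G.neighborFinset x ∩ U).card :=
              Finset.sum_erase_add _ _ hv
            have h3' : ((Finset.univ.filter
                (fun v => n - (U.card - 1) - 1 ≤ G.degree v)).erase v).card
                ≤ ∑ x ∈ (Finset.univ.filter
                  (fun v => n - (U.card - 1) - 1 ≤ G.degree v)).erase v,
                  (G.neighborFinset x ∩ U).card := by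
              have h := Finset.card_nsmul_le_sum ((Finset.univ.filter
                  (fun v => n - (U.card - 1) - 1 ≤ G.degree v)).erase v)
                (fun x => (G.neighborFinset x ∩ U).card) 1
                (fun x hx => hHe1 x (Finset.mem_of_mem_erase hx))
              simpa [smul_eq_mul] using h
            have h4' : ((Finset.univ.filter
                (fun v => n - (U.card - 1) - 1 ≤ G.degree v)).erase v).card
                = (Finset.univ.filter
                  (fun v => n - (U.card - 1) - 1 ≤ G.degree v)).card - 1 :=
              Finset.card_erase_of_mem hv
            omega
          have hdv := (Finset.mem_filter.mp hv).2
          have hsp := hsplit v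
          omega
        have hHw : 2 ≤ ((Finset.univ.filter
            (fun v => n - (U.card - 1) - 1 ≤ G.degree v)).erase w).card := by
          by_cases hwH : w ∈ Finset.univ.filter (fun v => n - (U.card - 1) - 1 ≤ G.degree v)
          · rw [Finset.card_erase_of_mem hwH]; omega
          · rw [Finset.erase_eq_of_notMem hwH]; omega
        obtain ⟨x₁, hx₁, x₂, hx₂, hx12⟩ := Finset.one_lt_card.mp hHw
        exact hKILLFULL x₁ x₂ (hHI x₁ (Finset.mem_of_mem_erase hx₁))
          (hHI x₂ (Finset.mem_of_mem_erase hx₂)) hx12 (Finset.ne_of_mem_erase hx₁)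
          (Finset.ne_of_mem_erase hx₂) (hHfull x₁ (Finset.mem_of_mem_erase hx₁))
          (hHfull x₂ (Finset.mem_of_mem_erase hx₂))
  · -- here 2 * I.card ≤ n
    have h2mn : 2 * I.card ≤ n := by omega
    have hlamev : 2 * c = n → K.card = 1 := by
      intro hce
      by_contra hcon
      have h12 : 2 ≤ K.card := by omega
      have hK1 := hKEY1 h12
      exact arith1 K.card I.card U.card c n hK1 (by exact_mod_cast hce)
        (by exact_mod_cast h2mn) (by exact_mod_cast hms) (by exact_mod_cast h12)
    have hlam2 : K.card ≤ 2 := by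
      by_contra hcon
      push_neg at hcon
      have hK1 := hKEY1 (by omega)
      rcases hc with hce | hco
      · exact arith1 K.card I.card U.card c n hK1 (by exact_mod_cast hce)
          (by exact_mod_cast h2mn) (by exact_mod_cast hms) (by exact_mod_cast (by omega : 2 ≤ K.card))
      · have h2m' : 2 * I.card + 1 ≤ n := by omega
        refine arith2 K.card I.card U.card c n hK1 ?_ ?_ (by exact_mod_cast hms)
          (by exact_mod_cast (by omega : 3 ≤ K.card))
        · exact_mod_cast hco
        · have : ((2 * I.card + 1 : ℕ) : ℤ) ≤ (n : ℤ) := by exact_mod_cast h2m'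
          push_cast at this
          linarith
    -- KEY2 numerics force 2m ≥ n-1
    have ht12 : n ≤ 2 * I.card + 1 := by
      by_contra hcon
      push_neg at hcon
      have hlit : (L ∩ I).card * (n + 1 - 2 * I.card) ≤ 2 * U.card := by
        have h1 : (L ∩ I).card * (n + 1)
            = (L ∩ I).card * (2 * I.card) + (L ∩ I).card * (n + 1 - 2 * I.card) := by
          rw [← Nat.mul_add]
          congr 1
          omega
        omega
      have hqZ : ((L ∩ I).card : ℤ) * ((n : ℤ) + 1 - 2 * I.card) ≤ 2 * U.card := by
        have hc1 : ((n + 1 - 2 * I.card : ℕ) : ℤ) = (n : ℤ) + 1 - 2 * I.card := by omega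
        have hc2 : (((L ∩ I).card * (n + 1 - 2 * I.card) : ℕ) : ℤ) ≤ ((2 * U.card : ℕ) : ℤ) := by
          exact_mod_cast hlit
        push_cast at hc2
        rw [hc1] at hc2
        exact hc2
      have hq3 : (I.card : ℤ) + U.card = n := by exact_mod_cast hms
      have hq5 : (n : ℤ) ≤ 2 * K.card + 2 * (L ∩ I).card := by
        have h' : n ≤ 2 * K.card + 2 * (L ∩ I).card := by omega
        exact_mod_cast h'
      have hq6 : (K.card : ℤ) ≤ 2 := by exact_mod_cast hlam2
      have hq8 : (13 : ℤ) ≤ n := by exact_mod_cast hn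
      have hq12 : (2 : ℤ) * I.card + 2 ≤ n := by
        have h' : 2 * I.card + 2 ≤ n := by omega
        exact_mod_cast h'
      have hq13 : (1 : ℤ) ≤ ((L ∩ I).card : ℤ) := by
        have h' : 1 ≤ (L ∩ I).card := by omega
        exact_mod_cast h'
      rcases hc with hce | hco
      · -- n even, lam = 1, t odd hence ≥ 3
        have hl1 := hlamev hce
        have hq9 : (K.card : ℤ) = 1 := by exact_mod_cast hl1
        have hq10 : (2 : ℤ) * c = n := by exact_mod_cast hce
        refine arith3 ((L ∩ I).card : ℤ) (I.card : ℤ) (U.card : ℤ) n hqZ hq3 ?_ ?_ hq8 hq13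
        · linarith
        · -- t odd ≥ 3 : since n even and t = n+1-2m ≥ 2
          omega
      · -- n odd, t even hence ≥ 4
        have hq10 : (2 : ℤ) * c + 1 = n := by exact_mod_cast hco
        refine arith4 ((L ∩ I).card : ℤ) (I.card : ℤ) (U.card : ℤ) n hqZ hq3 ?_ ?_ hq8 hq13
        · linarith
        · omega
    -- BLOCK F : collect full rows
    have he1 : ∀ x ∈ L ∩ I, 1 ≤ (G.neighborFinset x ∩ U).card := by
      intro x hx
      have h1 := hLI x hx
      omega
    have hfulllow : ∀ x ∈ L ∩ I, I.card ≤ (G.neighborFinset x ∩ I).card + 1 ∨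
        2 ≤ (G.neighborFinset x ∩ U).card := by
      intro x hx
      by_contra hcon
      push_neg at hcon
      obtain ⟨hc1, hc2⟩ := hcon
      have hdeg := hdegL x (Finset.mem_inter.mp hx).1
      have h2 := hsplit x
      omega
    set F := (L ∩ I).filter (fun x => I.card ≤ (G.neighborFinset x ∩ I).card + 1) with hF
    have hFcard : 2 * (L ∩ I).card ≤ F.card + U.card := by
      have hsum : ∑ x ∈ L ∩ I, (G.neighborFinset x ∩ U).card ≤ U.card :=
        le_trans (Finset.sum_le_sum_of_subset Finset.inter_subset_right) heIU
      have hsplitsum := Finset.sum_filter_add_sum_filter_not (L ∩ I)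
        (fun x => I.card ≤ (G.neighborFinset x ∩ I).card + 1)
        (fun x => (G.neighborFinset x ∩ U).card)
      have hA : F.card ≤ ∑ x ∈ (L ∩ I).filter
          (fun x => I.card ≤ (G.neighborFinset x ∩ I).card + 1),
          (G.neighborFinset x ∩ U).card := by
        rw [hF]
        have h := Finset.card_nsmul_le_sum
          ((L ∩ I).filter (fun x => I.card ≤ (G.neighborFinset x ∩ I).card + 1))
          (fun x => (G.neighborFinset x ∩ U).card) 1
          (fun x hx => he1 x (Finset.filter_subset _ _ hx))
        simpa [smul_eq_mul] using h
      have hB : 2 * ((L ∩ I).filter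
          (fun x => ¬ I.card ≤ (G.neighborFinset x ∩ I).card + 1)).card
          ≤ ∑ x ∈ (L ∩ I).filter
            (fun x => ¬ I.card ≤ (G.neighborFinset x ∩ I).card + 1),
            (G.neighborFinset x ∩ U).card := by
        have h := Finset.card_nsmul_le_sum
          ((L ∩ I).filter (fun x => ¬ I.card ≤ (G.neighborFinset x ∩ I).card + 1))
          (fun x => (G.neighborFinset x ∩ U).card) 2
          (fun x hx => by
            obtain ⟨hx1, hx2⟩ := Finset.mem_filter.mp hx
            rcases hfulllow x hx1 with h | h
            · exact absurd h hx2
            · exact h)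
        calc 2 * ((L ∩ I).filter
            (fun x => ¬ I.card ≤ (G.neighborFinset x ∩ I).card + 1)).card
            = ((L ∩ I).filter
              (fun x => ¬ I.card ≤ (G.neighborFinset x ∩ I).card + 1)).card • 2 := by
              rw [smul_eq_mul]; ring
        _ ≤ _ := h
      have hpart := Finset.card_filter_add_card_filter_not
        (s := L ∩ I) (p := fun x => I.card ≤ (G.neighborFinset x ∩ I).card + 1)
      rw [← hF] at hpart
      omega
    have hF3 : 3 ≤ F.card := by
      rcases hc with hce | hco
      · have hl1 := hlamev hce
        omega
      · omega
    have hFw : 2 ≤ (F.erase w).card := by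
      by_cases hwF : w ∈ F
      · rw [Finset.card_erase_of_mem hwF]; omega
      · rw [Finset.erase_eq_of_notMem hwF]; omega
    obtain ⟨x₁, hx₁, x₂, hx₂, hx12⟩ := Finset.one_lt_card.mp hFw
    have hx₁F : x₁ ∈ F := Finset.mem_of_mem_erase hx₁
    have hx₂F : x₂ ∈ F := Finset.mem_of_mem_erase hx₂
    have hx₁I : x₁ ∈ I := (Finset.mem_inter.mp (Finset.filter_subset _ _ hx₁F)).2
    have hx₂I : x₂ ∈ I := (Finset.mem_inter.mp (Finset.filter_subset _ _ hx₂F)).2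
    exact hKILLFULL x₁ x₂ hx₁I hx₂I hx12 (Finset.ne_of_mem_erase hx₁)
      (Finset.ne_of_mem_erase hx₂)
      (hfull_of x₁ hx₁I (Finset.mem_filter.mp hx₁F).2)
      (hfull_of x₂ hx₂I (Finset.mem_filter.mp hx₂F).2)
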